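/- Let p, p′, r, r′ : ℤ → [0,1] and θ, θ′, κ, κ′ : ℤ → [0,2π) satisfy (for both the unprimed and primed families): p₀ = 1 (so q₀ = 0), θ₀ = 0, p_x < 1 for all x ≥ 1 (so q_x ≠ 0 for x ≥ 1), θ_x = 0 whenever p_x = 0, and κ_x = 0 whenever r_x = 0. Since q₀ = 0, the closed subspace H_{[1,∞)} = ⊕_{x≥1} H_x is invariant under U_{p,r,θ,κ} and under U_{p′,r′,θ′,κ′}; let V and V′ denote their respective restrictions to H_{[1,∞)}. Then V and V′ are unitarily equivalent via a unitary W on H_{[1,∞)} with W H_x = H_x for all x ≥ 1 if and only if p_x = p′_x, r_x = r′_x, θ_x = θ′_x and κ_x = κ′_x for all x ≥ 1. -/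

import Mathlib

noncomputable section

/-- `H = ⊕_{x∈ℤ} H_x`, the ℓ² direct sum with each `H_x` a copy of `ℂ²`. -/
abbrev H : Type := lp (fun _ : ℤ × Fin 2 => ℂ) 2

/-- The canonical orthonormal basis vector `eᵢˣ` of `H_x` viewed in `H`. -/
def e (x : ℤ) (i : Fin 2) : H := lp.single 2 (x, i) 1

/-- The subspace `H_x` of `H`. -/
def Hx (x : ℤ) : Submodule ℂ H := Submodule.span ℂ {e x 0, e x 1}

/-- The rank-one operator `|u⟩⟨v| : w ↦ ⟨v, w⟩ u`. -/
def ketbra (u v : H) : H →L[ℂ] H := ((innerSL ℂ) v).smulRight u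

/-- The orthogonal projection of `H` onto `H_x`. -/
def P (x : ℤ) : H →L[ℂ] H := ketbra (e x 0) (e x 0) + ketbra (e x 1) (e x 1)

/-- A unitary (linear isometric equivalence) viewed as a continuous linear map. -/
def clm (U : H ≃ₗᵢ[ℂ] H) : H →L[ℂ] H := U.toLinearIsometry.toContinuousLinearMap

/-- `{u, v}` is an orthonormal basis of the two dimensional space `H_x`. -/
def ONBx (x : ℤ) (u v : H) : Prop :=
  u ∈ Hx x ∧ v ∈ Hx x ∧ ‖u‖ = 1 ∧ ‖v‖ = 1 ∧ (inner ℂ u v : ℂ) = 0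

/-- The SSQW conditions: `U H_x ⊆ H_{x-1} ⊕ H_x ⊕ H_{x+1}` and
`rank(P_{x±1} U P_x) ≤ 1` for all `x`. -/
def SSQW (U : H ≃ₗᵢ[ℂ] H) : Prop :=
  (∀ x : ℤ, ∀ ψ ∈ Hx x, U ψ ∈ Hx (x - 1) ⊔ Hx x ⊔ Hx (x + 1)) ∧
  (∀ x : ℤ, LinearMap.rank (((P (x + 1)).comp ((clm U).comp (P x))).toLinearMap) ≤ 1) ∧
  (∀ x : ℤ, LinearMap.rank (((P (x - 1)).comp ((clm U).comp (P x))).toLinearMap) ≤ 1)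

/-- Unitary equivalence of quantum walks: conjugation by a unitary `W`
preserving every `H_x`. -/
def UnitEquiv (U U' : H ≃ₗᵢ[ℂ] H) : Prop :=
  ∃ W : H ≃ₗᵢ[ℂ] H,
    (∀ x : ℤ, (Hx x).map (W.toLinearEquiv : H →ₗ[ℂ] H) = Hx x) ∧
    U' = (W.symm.trans U).trans W

/-- `V` is the quantum walk `U_{p,r,θ,κ}`: with `q_x = √(1-p_x²)` and
`s_x = √(1-r_x²)`, it sends `e^{iκ_x} r_x e₁ˣ + s_x e₂ˣ` to
`e^{iθ_x} p_x e₁ˣ + q_x e₂^{x+1}`, and `s_x e₁ˣ − e^{−iκ_x} r_x e₂ˣ` to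
`q_{x−1} e₁^{x−1} − e^{−iθ_{x−1}} p_{x−1} e₂ˣ`, for every `x ∈ ℤ`. -/
def IsUprtk (p r θ κ : ℤ → ℝ) (V : H ≃ₗᵢ[ℂ] H) : Prop :=
  ∀ x : ℤ,
    V ((Complex.exp (Complex.I * (κ x : ℂ)) * (r x : ℂ)) • e x 0
        + (Real.sqrt (1 - (r x) ^ 2) : ℂ) • e x 1)
      = (Complex.exp (Complex.I * (θ x : ℂ)) * (p x : ℂ)) • e x 0
        + (Real.sqrt (1 - (p x) ^ 2) : ℂ) • e (x + 1) 1 ∧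
    V ((Real.sqrt (1 - (r x) ^ 2) : ℂ) • e x 0
        - (Complex.exp (-(Complex.I * (κ x : ℂ))) * (r x : ℂ)) • e x 1)
      = (Real.sqrt (1 - (p (x - 1)) ^ 2) : ℂ) • e (x - 1) 0
        - (Complex.exp (-(Complex.I * (θ (x - 1) : ℂ))) * (p (x - 1) : ℂ)) • e x 1

/-- The closed subspace `H_{[n,∞)} = ⊕_{x ≥ n} H_x` of `H`. -/
def Hge (n : ℤ) : Submodule ℂ H :=
  (Submodule.span ℂ {v : H | ∃ x : ℤ, n ≤ x ∧ ∃ i : Fin 2, v = e x i}).topologicalClosure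

/-!
Comparing coordinates in `W V = V' W` first shows that `W` is diagonal in the basis `eᵢˣ`: since
`q_x ≠ 0`, the walk moves `H_{x+1}` into `H_x` only along `e₁ˣ`, so `W e₁ˣ` has no `e₂ˣ`-part, and
unitarity does the rest. Hence `W` is a gauge by unimodular phases `g`. The hopping amplitudes
`x → x + 1` then have equal moduli, which gives `p = p'` and `r = r'`. The phases are propagated
from the boundary site, where `p₀ = 1` and `θ₀ = 0` leave no freedom, by an induction on `x`
carrying `R_x = R'_x` together with the compatibility of the gauge phases; the conventions for
`θ` and `κ` at vanishing amplitudes turn equality of `e^{iθ_x} p_x` and `e^{iκ_x} r_x` into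
equality of the parameters. Conversely, equal parameters give `V = V'` on `H_{[1,∞)}`.
-/

open ComplexConjugate

@[simp] lemma e_apply (x : ℤ) (i : Fin 2) (z : ℤ × Fin 2) :
    (e x i : ℤ × Fin 2 → ℂ) z = if z = (x, i) then 1 else 0 := by
  rw [e, lp.single_apply, Pi.single_apply]

@[simp] lemma H.add_apply (f g : H) (z : ℤ × Fin 2) : (f + g) z = f z + g z := rfl

@[simp] lemma H.sub_apply (f g : H) (z : ℤ × Fin 2) : (f - g) z = f z - g z := rfl

@[simp] lemma H.smul_apply (c : ℂ) (f : H) (z : ℤ × Fin 2) : (c • f) z = c * f z := rfl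

lemma inner_e_left (x : ℤ) (i : Fin 2) (ψ : H) : inner ℂ (e x i) ψ = ψ (x, i) := by
  simp [e, lp.inner_single_left]

lemma norm_e (x : ℤ) (i : Fin 2) : ‖e x i‖ = 1 := by
  simp [e, lp.norm_single]

lemma e_mem_Hx (x : ℤ) (i : Fin 2) : e x i ∈ Hx x := by
  fin_cases i
  exacts [Submodule.subset_span (by simp), Submodule.subset_span (by simp)]

lemma eq_smul_add_smul_of_mem_Hx {x : ℤ} {ψ : H} (hψ : ψ ∈ Hx x) :
    ψ = ψ (x, 0) • e x 0 + ψ (x, 1) • e x 1 := by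
  obtain ⟨a, b, rfl⟩ := Submodule.mem_span_pair.1 hψ
  simp

lemma apply_eq_zero_of_mem_Hx {x y : ℤ} {ψ : H} (hψ : ψ ∈ Hx x) (hy : y ≠ x) (i : Fin 2) :
    ψ (y, i) = 0 := by
  obtain ⟨a, b, rfl⟩ := Submodule.mem_span_pair.1 hψ
  simp [hy]

lemma Hx_le_Hge {n x : ℤ} (h : n ≤ x) : Hx x ≤ Hge n := by
  refine Submodule.span_le.2 fun v hv =>
    Submodule.le_topologicalClosure _ (Submodule.subset_span ?_)
  rcases hv with rfl | rfl
  exacts [⟨x, h, 0, rfl⟩, ⟨x, h, 1, rfl⟩]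

lemma eqOn_Hge {E : Type*} [TopologicalSpace E] [T2Space E] [AddCommMonoid E] [Module ℂ E]
    {f g : H →L[ℂ] E} {n : ℤ} (h : ∀ x, n ≤ x → ∀ i, f (e x i) = g (e x i)) :
    Set.EqOn f g (Hge n) := by
  rw [Hge, Submodule.topologicalClosure_coe]
  refine Set.EqOn.closure (fun ψ hψ => LinearMap.eqOn_span (f := (f : H →ₗ[ℂ] E)) (g := g) ?_ hψ)
    f.continuous g.continuous
  rintro _ ⟨x, hx, i, rfl⟩
  exact h x hx i

lemma eq_and_eq_of_mul_eq_mul {a b a' b' t t' : ℝ} (h : a ^ 2 + b ^ 2 = 1)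
    (h' : a' ^ 2 + b' ^ 2 = 1) (ht : 0 < t) (ht' : 0 ≤ t') (ha : a * t = a' * t')
    (hb : b * t = b' * t') : t = t' ∧ b = b' := by
  have hsq : t ^ 2 = t' ^ 2 := by
    linear_combination (a * t + a' * t') * ha + (b * t + b' * t') * hb - t ^ 2 * h + t' ^ 2 * h'
  obtain rfl : t = t' := (sq_eq_sq₀ ht.le ht').1 hsq
  exact ⟨rfl, mul_right_cancel₀ ht.ne' hb⟩

/-- The walk `U_{p,r,θ,κ}` has complex amplitudes `P = amp p θ` and `R = amp r κ`. -/
def amp (p θ : ℤ → ℝ) (x : ℤ) : ℂ := Complex.exp (Complex.I * θ x) * p x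

lemma conj_amp (p θ : ℤ → ℝ) (x : ℤ) :
    conj (amp p θ x) = Complex.exp (-(Complex.I * θ x)) * p x := by
  simp [amp, ← Complex.exp_conj]

lemma norm_amp (p θ : ℤ → ℝ) (x : ℤ) : ‖amp p θ x‖ = |p x| := by
  simp [amp]

lemma eq_of_amp_eq {p θ p' θ' : ℤ → ℝ} {x : ℤ} (hp : 0 ≤ p x) (hp' : 0 ≤ p' x)
    (hθ : θ x ∈ Set.Ico 0 (2 * Real.pi)) (hθ' : θ' x ∈ Set.Ico 0 (2 * Real.pi))
    (hpθ : p x = 0 → θ x = 0) (hpθ' : p' x = 0 → θ' x = 0) (h : amp p θ x = amp p' θ' x) :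
    p x = p' x ∧ θ x = θ' x := by
  have hpp : p x = p' x := by
    simpa [norm_amp, abs_of_nonneg hp, abs_of_nonneg hp'] using congrArg norm h
  refine ⟨hpp, ?_⟩
  rcases eq_or_ne (p x) 0 with h0 | h0
  · rw [hpθ h0, hpθ' (hpp ▸ h0)]
  · rw [amp, amp, ← hpp] at h
    refine Circle.exp_injOn_Ico (by simp) hθ hθ' (Subtype.ext ?_)
    simpa [Circle.coe_exp, mul_comm] using mul_right_cancel₀ (Complex.ofReal_ne_zero.2 h0) h

/-- `U_{p,r,θ,κ}` with the phases absorbed into the complex amplitudes `P` and `R`. -/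
structure IsWalk (P R : ℤ → ℂ) (q s : ℤ → ℝ) (V : H ≃ₗᵢ[ℂ] H) : Prop where
  map_u (x : ℤ) : V (R x • e x 0 + (s x : ℂ) • e x 1) = P x • e x 0 + (q x : ℂ) • e (x + 1) 1
  map_v (x : ℤ) : V ((s x : ℂ) • e x 0 - conj (R x) • e x 1) =
    (q (x - 1) : ℂ) • e (x - 1) 0 - conj (P (x - 1)) • e x 1
  norm_sq_add_sq (x : ℤ) : ‖R x‖ ^ 2 + s x ^ 2 = 1
  q_nonneg (x : ℤ) : 0 ≤ q x
  s_nonneg (x : ℤ) : 0 ≤ s x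

lemma IsUprtk.isWalk {p r θ κ : ℤ → ℝ} {V : H ≃ₗᵢ[ℂ] H} (hV : IsUprtk p r θ κ V)
    (hr : ∀ x, r x ∈ Set.Icc (0 : ℝ) 1) :
    IsWalk (amp p θ) (amp r κ) (fun x => √(1 - p x ^ 2)) (fun x => √(1 - r x ^ 2)) V where
  map_u x := by simpa [amp] using (hV x).1
  map_v x := by simpa [conj_amp] using (hV x).2
  norm_sq_add_sq x := by
    rw [norm_amp, sq_abs, Real.sq_sqrt (by nlinarith [(hr x).1, (hr x).2])]
    ring
  q_nonneg _ := Real.sqrt_nonneg _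
  s_nonneg _ := Real.sqrt_nonneg _

section Walk

variable {P R P' R' : ℤ → ℂ} {q s q' s' : ℤ → ℝ} {V V' : H ≃ₗᵢ[ℂ] H}

namespace IsWalk

lemma conj_mul_add_sq (hV : IsWalk P R q s V) (x : ℤ) :
    conj (R x) * R x + (s x : ℂ) ^ 2 = 1 := by
  rw [Complex.conj_mul']
  exact_mod_cast hV.norm_sq_add_sq x

lemma apply_e_zero (hV : IsWalk P R q s V) (x : ℤ) :
    V (e x 0) = conj (R x) • (P x • e x 0 + (q x : ℂ) • e (x + 1) 1) +
      (s x : ℂ) • ((q (x - 1) : ℂ) • e (x - 1) 0 - conj (P (x - 1)) • e x 1) := by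
  rw [← hV.map_u, ← hV.map_v, ← map_smul, ← map_smul, ← map_add]
  congr 1
  match_scalars
  · linear_combination -(hV.conj_mul_add_sq x)
  · ring

lemma apply_e_one (hV : IsWalk P R q s V) (x : ℤ) :
    V (e x 1) = (s x : ℂ) • (P x • e x 0 + (q x : ℂ) • e (x + 1) 1) -
      R x • ((q (x - 1) : ℂ) • e (x - 1) 0 - conj (P (x - 1)) • e x 1) := by
  rw [← hV.map_u, ← hV.map_v, ← map_smul, ← map_smul, ← map_sub]
  congr 1
  match_scalars
  · linear_combination -(hV.conj_mul_add_sq x)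
  · ring

lemma apply_pred_one_eq_zero (hV : IsWalk P R q s V) {x : ℤ} {ψ : H} (hψ : ψ ∈ Hx (x + 1)) :
    V ψ (x, 1) = 0 := by
  rw [eq_smul_add_smul_of_mem_Hx hψ, map_add, map_smul, map_smul, hV.apply_e_zero,
    hV.apply_e_one]
  simp [-Complex.coe_smul, show x ≠ x + 1 + 1 by omega]

lemma eqOn_Hge (hV : IsWalk P R q s V) (hV' : IsWalk P' R' q' s' V') {n : ℤ}
    (hP : ∀ x, n - 1 ≤ x → P x = P' x) (hq : ∀ x, n - 1 ≤ x → q x = q' x)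
    (hR : ∀ x, n ≤ x → R x = R' x) (hs : ∀ x, n ≤ x → s x = s' x) :
    Set.EqOn V V' (Hge n) := by
  refine _root_.eqOn_Hge (f := (V : H →L[ℂ] H)) (g := (V' : H →L[ℂ] H)) fun x hx =>
    Fin.forall_fin_two.2 ⟨?_, ?_⟩
  all_goals
    show V _ = V' _
    simp only [hV.apply_e_zero, hV'.apply_e_zero, hV.apply_e_one, hV'.apply_e_one,
      hP x (by omega), hP (x - 1) (by omega), hq x (by omega), hq (x - 1) (by omega), hR x hx,
      hs x hx]

end IsWalk

section Gauge

variable {W : H ≃ₗᵢ[ℂ] H}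

lemma norm_eq_one_of_apply_e_eq_smul {x : ℤ} {i : Fin 2} {c : ℂ}
    (h : W (e x i) = c • e x i) : ‖c‖ = 1 := by
  simpa [h, norm_smul, norm_e] using W.norm_map (e x i)

lemma apply_eq_mul_of_apply_e_eq_smul {x : ℤ} {i : Fin 2} {c : ℂ}
    (h : W (e x i) = c • e x i) (ψ : H) : W ψ (x, i) = c * ψ (x, i) := by
  have hc : c * conj c = 1 := by
    rw [Complex.mul_conj', norm_eq_one_of_apply_e_eq_smul h]
    simp
  have hinner := W.inner_map_map (e x i) ψ
  rw [h, inner_smul_left, inner_e_left, inner_e_left] at hinner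
  linear_combination c * hinner - W ψ (x, i) * hc

lemma apply_e_one_eq_smul {x : ℤ} {a : ℂ} (h0 : W (e x 0) = a • e x 0)
    (h1 : W (e x 1) ∈ Hx x) : W (e x 1) = W (e x 1) (x, 1) • e x 1 := by
  have ha : a ≠ 0 := by
    rintro rfl
    simpa using norm_eq_one_of_apply_e_eq_smul h0
  have horth : W (e x 1) (x, 0) = 0 := by
    have h := W.inner_map_map (e x 0) (e x 1)
    rw [h0, inner_smul_left, inner_e_left, inner_e_left] at h
    simpa [ha] using h
  conv_lhs => rw [eq_smul_add_smul_of_mem_Hx h1, horth, zero_smul, zero_add]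

lemma apply_e_zero_eq_smul (hV : IsWalk P R q s V) (hV' : IsWalk P' R' q' s' V') {x : ℤ}
    (hq : q x ≠ 0) (hWx : ∀ φ ∈ Hx x, W φ ∈ Hx x) (hWx₁ : ∀ φ ∈ Hx (x + 1), W φ ∈ Hx (x + 1))
    (hint : ∀ φ ∈ Hx (x + 1), W (V φ) = V' (W φ)) :
    W (e x 0) = W (e x 0) (x, 0) • e x 0 := by
  set φ : H := (s (x + 1) : ℂ) • e (x + 1) 0 - conj (R (x + 1)) • e (x + 1) 1
  have hφ : φ ∈ Hx (x + 1) := Submodule.sub_mem _ (Submodule.smul_mem _ _ (e_mem_Hx _ _))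
    (Submodule.smul_mem _ _ (e_mem_Hx _ _))
  have h := congrArg (· (x, 1)) (hint φ hφ)
  simp only [φ, hV.map_v, hV'.apply_pred_one_eq_zero (hWx₁ φ hφ)] at h
  simp [-Complex.coe_smul, apply_eq_zero_of_mem_Hx (hWx₁ _ (e_mem_Hx (x + 1) 1)), hq] at h
  conv_lhs => rw [eq_smul_add_smul_of_mem_Hx (hWx _ (e_mem_Hx x 0)), h, zero_smul, add_zero]

def diagCoeff (W : H ≃ₗᵢ[ℂ] H) (z : ℤ × Fin 2) : ℂ := W (e z.1 z.2) z

lemma apply_e_eq_diagCoeff_smul (hV : IsWalk P R q s V) (hV' : IsWalk P' R' q' s' V')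
    (hq : ∀ x, 1 ≤ x → q x ≠ 0) (hW : ∀ x, 1 ≤ x → ∀ φ ∈ Hx x, W φ ∈ Hx x)
    (hint : ∀ x, 1 ≤ x → ∀ φ ∈ Hx x, W (V φ) = V' (W φ)) {x : ℤ} (hx : 1 ≤ x) (i : Fin 2) :
    W (e x i) = diagCoeff W (x, i) • e x i := by
  have h0 := apply_e_zero_eq_smul hV hV' (hq x hx) (hW x hx) (hW (x + 1) (by omega))
    (hint (x + 1) (by omega))
  fin_cases i
  exacts [h0, apply_e_one_eq_smul h0 (hW x hx _ (e_mem_Hx x 1))]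

end Gauge

/-- `W V = V' W` on `H_{[1,∞)}` for the diagonal `W` with entries `g`, read off on matrix
coefficients. -/
def DiagIntertwines (g : ℤ × Fin 2 → ℂ) (V V' : H ≃ₗᵢ[ℂ] H) : Prop :=
  ∀ x y : ℤ, 1 ≤ x → 1 ≤ y → ∀ i j : Fin 2,
    g (x, i) * V (e y j) (x, i) = g (y, j) * V' (e y j) (x, i)

lemma diagIntertwines_diagCoeff {W : H ≃ₗᵢ[ℂ] H}
    (hdiag : ∀ x, 1 ≤ x → ∀ i, W (e x i) = diagCoeff W (x, i) • e x i)
    (hint : ∀ x, 1 ≤ x → ∀ φ ∈ Hx x, W (V φ) = V' (W φ)) :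
    DiagIntertwines (diagCoeff W) V V' := by
  intro x y hx hy i j
  rw [← apply_eq_mul_of_apply_e_eq_smul (hdiag x hx i), hint y hy _ (e_mem_Hx y j),
    hdiag y hy j, map_smul, H.smul_apply]

namespace DiagIntertwines

variable {g : ℤ × Fin 2 → ℂ}

lemma hop_right (hrel : DiagIntertwines g V V') (hV : IsWalk P R q s V)
    (hV' : IsWalk P' R' q' s' V') {x : ℤ} (hx : 1 ≤ x) :
    g (x + 1, 1) * (conj (R x) * q x) = g (x, 0) * (conj (R' x) * q' x) ∧
      g (x + 1, 1) * (s x * q x) = g (x, 1) * (s' x * q' x) := by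
  have h0 := hrel (x + 1) x (by omega) hx 1 0
  have h1 := hrel (x + 1) x (by omega) hx 1 1
  simp only [hV.apply_e_zero, hV'.apply_e_zero, hV.apply_e_one, hV'.apply_e_one] at h0 h1
  simp [-Complex.coe_smul] at h0 h1
  exact ⟨h0, h1⟩

lemma hop_left (hrel : DiagIntertwines g V V') (hV : IsWalk P R q s V)
    (hV' : IsWalk P' R' q' s' V') {x : ℤ} (hx : 1 ≤ x) :
    g (x, 0) * (R (x + 1) * q x) = g (x + 1, 1) * (R' (x + 1) * q' x) ∧
      g (x, 0) * (s (x + 1) * q x) = g (x + 1, 0) * (s' (x + 1) * q' x) := by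
  have h0 := hrel x (x + 1) hx (by omega) 0 1
  have h1 := hrel x (x + 1) hx (by omega) 0 0
  simp only [hV.apply_e_zero, hV'.apply_e_zero, hV.apply_e_one, hV'.apply_e_one] at h0 h1
  simp [-Complex.coe_smul] at h0 h1
  exact ⟨h0, h1⟩

lemma stay_zero (hrel : DiagIntertwines g V V') (hV : IsWalk P R q s V)
    (hV' : IsWalk P' R' q' s' V') {x : ℤ} (hx : 1 ≤ x) :
    g (x, 0) * (conj (R x) * P x) = g (x, 0) * (conj (R' x) * P' x) ∧
      g (x, 0) * (s x * P x) = g (x, 1) * (s' x * P' x) := by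
  have h0 := hrel x x hx hx 0 0
  have h1 := hrel x x hx hx 0 1
  simp only [hV.apply_e_zero, hV'.apply_e_zero, hV.apply_e_one, hV'.apply_e_one] at h0 h1
  simp [-Complex.coe_smul, -mul_eq_mul_left_iff, show x ≠ x - 1 by omega] at h0 h1
  exact ⟨h0, h1⟩

lemma stay_one (hrel : DiagIntertwines g V V') (hV : IsWalk P R q s V)
    (hV' : IsWalk P' R' q' s' V') {x : ℤ} (hx : 1 ≤ x) :
    g (x, 1) * (R x * conj (P (x - 1))) = g (x, 1) * (R' x * conj (P' (x - 1))) ∧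
      g (x, 1) * (s x * conj (P (x - 1))) = g (x, 0) * (s' x * conj (P' (x - 1))) := by
  have h0 := hrel x x hx hx 1 1
  have h1 := hrel x x hx hx 1 0
  simp only [hV.apply_e_zero, hV'.apply_e_zero, hV.apply_e_one, hV'.apply_e_one] at h0 h1
  simp [-Complex.coe_smul, -mul_eq_mul_left_iff, show x ≠ x - 1 by omega] at h0 h1
  exact ⟨h0, h1⟩

lemma q_eq_and_s_eq (hrel : DiagIntertwines g V V') (hV : IsWalk P R q s V)
    (hV' : IsWalk P' R' q' s' V') (hg : ∀ z : ℤ × Fin 2, 1 ≤ z.1 → ‖g z‖ = 1) {x : ℤ}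
    (hx : 1 ≤ x) (hq : 0 < q x) : q x = q' x ∧ s x = s' x := by
  obtain ⟨hR, hs⟩ := hrel.hop_right hV hV' hx
  have hR := congrArg norm hR
  have hs := congrArg norm hs
  simp only [norm_mul, hg (x + 1, 1) (by simp; omega), hg (x, 0) hx, hg (x, 1) hx, one_mul,
    Complex.norm_conj, Complex.norm_real, Real.norm_of_nonneg (hV.q_nonneg x),
    Real.norm_of_nonneg (hV'.q_nonneg x), Real.norm_of_nonneg (hV.s_nonneg x),
    Real.norm_of_nonneg (hV'.s_nonneg x)] at hR hs
  exact eq_and_eq_of_mul_eq_mul (hV.norm_sq_add_sq x) (hV'.norm_sq_add_sq x) hq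
    (hV'.q_nonneg x) hR hs

lemma R_one_eq (hrel : DiagIntertwines g V V') (hV : IsWalk P R q s V)
    (hV' : IsWalk P' R' q' s' V') (hg : ∀ z : ℤ × Fin 2, 1 ≤ z.1 → g z ≠ 0)
    (hP₀ : P 0 = P' 0) (hP₀' : P 0 ≠ 0) (hs' : s 1 = s' 1) :
    R 1 = R' 1 ∧ (s 1 ≠ 0 → g (1, 1) = g (1, 0)) := by
  obtain ⟨hG, hH⟩ := hrel.stay_one hV hV' le_rfl
  rw [sub_self, ← hP₀] at hG hH
  rw [← hs'] at hH
  exact ⟨mul_right_cancel₀ (by simpa using hP₀') (mul_left_cancel₀ (hg _ le_rfl) hG),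
    fun hs => mul_right_cancel₀ (by simp [hs, hP₀']) hH⟩

lemma P_eq_and_gauge_succ (hrel : DiagIntertwines g V V') (hV : IsWalk P R q s V)
    (hV' : IsWalk P' R' q' s' V') (hg : ∀ z : ℤ × Fin 2, 1 ≤ z.1 → g z ≠ 0) {x : ℤ}
    (hx : 1 ≤ x) (hq : q x ≠ 0) (hq' : q x = q' x) (hs' : s x = s' x) (hR : R x = R' x)
    (hgx : s x ≠ 0 → g (x, 1) = g (x, 0)) : P x = P' x ∧ g (x + 1, 1) = g (x, 0) := by
  obtain ⟨hA, hB⟩ := hrel.hop_right hV hV' hx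
  obtain ⟨hC, hD⟩ := hrel.stay_zero hV hV' hx
  simp only [← hq', ← hs', ← hR] at hA hB hC hD
  have hg0 : g (x, 0) ≠ 0 := hg _ hx
  have hRs := hV.norm_sq_add_sq x
  constructor
  · by_cases hs : s x = 0
    · have hR0 : conj (R x) ≠ 0 := by
        rw [Ne, map_eq_zero]
        intro h
        simp [h, hs] at hRs
      exact mul_left_cancel₀ hR0 (mul_left_cancel₀ hg0 hC)
    · rw [hgx hs] at hD
      exact mul_left_cancel₀ (by exact_mod_cast hs) (mul_left_cancel₀ hg0 hD)
  · by_cases hR0 : R x = 0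
    · have hs : s x ≠ 0 := by
        intro h
        simp [hR0, h] at hRs
      rw [← hgx hs]
      exact mul_right_cancel₀ (by simp [hs, hq]) hB
    · exact mul_right_cancel₀ (by simp [hR0, hq]) hA

lemma R_eq_and_gauge_succ (hrel : DiagIntertwines g V V') (hV : IsWalk P R q s V)
    (hV' : IsWalk P' R' q' s' V') (hg : ∀ z : ℤ × Fin 2, 1 ≤ z.1 → g z ≠ 0) {x : ℤ}
    (hx : 1 ≤ x) (hq : q x ≠ 0) (hq' : q x = q' x) (hs' : s (x + 1) = s' (x + 1))
    (hgx : g (x + 1, 1) = g (x, 0)) :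
    R (x + 1) = R' (x + 1) ∧ (s (x + 1) ≠ 0 → g (x + 1, 1) = g (x + 1, 0)) := by
  obtain ⟨hE, hF⟩ := hrel.hop_left hV hV' hx
  rw [← hq', hgx] at hE
  rw [← hq', ← hs'] at hF
  exact ⟨mul_right_cancel₀ (by exact_mod_cast hq) (mul_left_cancel₀ (hg _ hx) hE),
    fun hs => hgx.trans (mul_right_cancel₀ (by simp [hs, hq]) hF)⟩

lemma amp_eq (hrel : DiagIntertwines g V V') (hV : IsWalk P R q s V)
    (hV' : IsWalk P' R' q' s' V') (hg : ∀ z : ℤ × Fin 2, 1 ≤ z.1 → ‖g z‖ = 1)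
    (hq : ∀ x, 1 ≤ x → 0 < q x) (hP₀ : P 0 = P' 0) (hP₀' : P 0 ≠ 0) {x : ℤ} (hx : 1 ≤ x) :
    P x = P' x ∧ R x = R' x := by
  have hg0 : ∀ z : ℤ × Fin 2, 1 ≤ z.1 → g z ≠ 0 := fun z hz =>
    norm_ne_zero_iff.1 (by rw [hg z hz]; exact one_ne_zero)
  have hqs := fun x hx => hrel.q_eq_and_s_eq hV hV' hg hx (hq x hx)
  have step := fun x (hx : 1 ≤ x) (hR : R x = R' x ∧ (s x ≠ 0 → g (x, 1) = g (x, 0))) =>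
    hrel.P_eq_and_gauge_succ hV hV' hg0 hx (hq x hx).ne' (hqs x hx).1 (hqs x hx).2 hR.1 hR.2
  have hR : R x = R' x ∧ (s x ≠ 0 → g (x, 1) = g (x, 0)) := by
    induction x, hx using Int.leInduction with
    | base => exact hrel.R_one_eq hV hV' hg0 hP₀ hP₀' (hqs 1 le_rfl).2
    | succ x hx ih =>
      exact hrel.R_eq_and_gauge_succ hV hV' hg0 hx (hq x hx).ne' (hqs x hx).1
        (hqs (x + 1) (by omega)).2 (step x hx ih).2
  exact ⟨(step x hx hR).1, hR.1⟩

end DiagIntertwines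

lemma IsWalk.amp_eq_of_conj (hV : IsWalk P R q s V) (hV' : IsWalk P' R' q' s' V')
    (hq : ∀ x, 1 ≤ x → 0 < q x) (hP₀ : P 0 = P' 0) (hP₀' : P 0 ≠ 0) {W : H ≃ₗᵢ[ℂ] H}
    (hWx : ∀ x, 1 ≤ x → (Hx x).map (W.toLinearEquiv : H →ₗ[ℂ] H) = Hx x)
    (hWV : ∀ ψ ∈ Hge 1, W (V (W.symm ψ)) = V' ψ) {x : ℤ} (hx : 1 ≤ x) :
    P x = P' x ∧ R x = R' x := by
  have hW : ∀ x, 1 ≤ x → ∀ φ ∈ Hx x, W φ ∈ Hx x := fun x hx φ hφ =>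
    hWx x hx ▸ Submodule.mem_map_of_mem hφ
  have hint : ∀ x, 1 ≤ x → ∀ φ ∈ Hx x, W (V φ) = V' (W φ) := fun x hx φ hφ => by
    simpa using hWV _ (Hx_le_Hge hx (hW x hx φ hφ))
  have hdiag := fun x (hx : 1 ≤ x) i =>
    apply_e_eq_diagCoeff_smul hV hV' (fun x hx => (hq x hx).ne') hW hint hx i
  refine (diagIntertwines_diagCoeff hdiag hint).amp_eq hV hV' ?_ hq hP₀ hP₀' hx
  rintro ⟨x, i⟩ hx
  exact norm_eq_one_of_apply_e_eq_smul (hdiag x hx i)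

end Walk

theorem unitary_equiv_iff_case_two_general (p p' r r' θ θ' κ κ' : ℤ → ℝ)
    (hp : ∀ x : ℤ, p x ∈ Set.Icc (0 : ℝ) 1) (hp' : ∀ x : ℤ, p' x ∈ Set.Icc (0 : ℝ) 1)
    (hr : ∀ x : ℤ, r x ∈ Set.Icc (0 : ℝ) 1) (hr' : ∀ x : ℤ, r' x ∈ Set.Icc (0 : ℝ) 1)
    (hθ : ∀ x : ℤ, θ x ∈ Set.Ico (0 : ℝ) (2 * Real.pi))
    (hθ' : ∀ x : ℤ, θ' x ∈ Set.Ico (0 : ℝ) (2 * Real.pi))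
    (hκ : ∀ x : ℤ, κ x ∈ Set.Ico (0 : ℝ) (2 * Real.pi))
    (hκ' : ∀ x : ℤ, κ' x ∈ Set.Ico (0 : ℝ) (2 * Real.pi))
    (hp0 : p 0 = 1) (hp0' : p' 0 = 1) (hθ0 : θ 0 = 0) (hθ0' : θ' 0 = 0)
    (hq : ∀ x : ℤ, 1 ≤ x → p x < 1)
    (hpθ : ∀ x : ℤ, p x = 0 → θ x = 0) (hpθ' : ∀ x : ℤ, p' x = 0 → θ' x = 0)
    (hrκ : ∀ x : ℤ, r x = 0 → κ x = 0) (hrκ' : ∀ x : ℤ, r' x = 0 → κ' x = 0)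
    (V V' : H ≃ₗᵢ[ℂ] H)
    (hV : IsUprtk p r θ κ V) (hV' : IsUprtk p' r' θ' κ' V') :
    (∃ W : H ≃ₗᵢ[ℂ] H,
        (∀ x : ℤ, 1 ≤ x → (Hx x).map (W.toLinearEquiv : H →ₗ[ℂ] H) = Hx x) ∧
        (∀ ψ ∈ Hge 1, W (V (W.symm ψ)) = V' ψ)) ↔
      (∀ x : ℤ, 1 ≤ x → p x = p' x ∧ r x = r' x ∧ θ x = θ' x ∧ κ x = κ' x) := by
  have hW := hV.isWalk hr
  have hW' := hV'.isWalk hr'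
  have hamp₀ : amp p θ 0 = amp p' θ' 0 := by simp [amp, hp0, hp0', hθ0, hθ0']
  constructor
  · rintro ⟨W, hWx, hWV⟩ x hx
    have hqpos : ∀ x, 1 ≤ x → 0 < √(1 - p x ^ 2) := fun x hx =>
      Real.sqrt_pos.2 (by nlinarith [(hp x).1, hq x hx])
    obtain ⟨hP, hR⟩ :=
      hW.amp_eq_of_conj hW' hqpos hamp₀ (by simp [amp, hp0, hθ0]) hWx hWV hx
    obtain ⟨hpx, hθx⟩ := eq_of_amp_eq (hp x).1 (hp' x).1 (hθ x) (hθ' x) (hpθ x) (hpθ' x) hP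
    obtain ⟨hrx, hκx⟩ := eq_of_amp_eq (hr x).1 (hr' x).1 (hκ x) (hκ' x) (hrκ x) (hrκ' x) hR
    exact ⟨hpx, hrx, hθx, hκx⟩
  · intro h
    have h₀ : ∀ x, 0 ≤ x → p x = p' x ∧ θ x = θ' x := fun x hx =>
      (eq_or_lt_of_le hx).elim (fun hx => hx ▸ ⟨hp0.trans hp0'.symm, hθ0.trans hθ0'.symm⟩)
        fun hx => ⟨(h x hx).1, (h x hx).2.2.1⟩
    refine ⟨LinearIsometryEquiv.refl ℂ H, fun x _ => Submodule.map_id _, fun ψ hψ => ?_⟩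
    refine hW.eqOn_Hge hW' (fun x hx => ?_) (fun x hx => ?_) (fun x hx => ?_) (fun x hx => ?_) hψ
    · simp [amp, (h₀ x hx).1, (h₀ x hx).2]
    · simp [(h₀ x hx).1]
    · simp [amp, (h x hx).2.1, (h x hx).2.2.2]
    · simp [(h x hx).2.1]

/-- **Theorem 3.5, Case (2).** Suppose `p₀ = p′₀ = 1`,
`θ₀ = θ′₀ = 0`, `p_x, p′_x < 1` for `x ≥ 1`, and the conventions `θ_x = 0` when
`p_x = 0`, `κ_x = 0` when `r_x = 0` hold.  Then the restrictions of
`U_{p,r,θ,κ}` and `U_{p′,r′,θ′,κ′}` to the invariant subspace `H_{[1,∞)}` are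
unitarily equivalent via a unitary preserving each `H_x` (`x ≥ 1`) iff
`p_x = p′_x`, `r_x = r′_x`, `θ_x = θ′_x` and `κ_x = κ′_x` for all `x ≥ 1`. -/
theorem unitary_equiv_iff_case_two (p p' r r' θ θ' κ κ' : ℤ → ℝ)
    (hp : ∀ x : ℤ, p x ∈ Set.Icc (0 : ℝ) 1) (hp' : ∀ x : ℤ, p' x ∈ Set.Icc (0 : ℝ) 1)
    (hr : ∀ x : ℤ, r x ∈ Set.Icc (0 : ℝ) 1) (hr' : ∀ x : ℤ, r' x ∈ Set.Icc (0 : ℝ) 1)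
    (hθ : ∀ x : ℤ, θ x ∈ Set.Ico (0 : ℝ) (2 * Real.pi))
    (hθ' : ∀ x : ℤ, θ' x ∈ Set.Ico (0 : ℝ) (2 * Real.pi))
    (hκ : ∀ x : ℤ, κ x ∈ Set.Ico (0 : ℝ) (2 * Real.pi))
    (hκ' : ∀ x : ℤ, κ' x ∈ Set.Ico (0 : ℝ) (2 * Real.pi))
    (hp0 : p 0 = 1) (hp0' : p' 0 = 1) (hθ0 : θ 0 = 0) (hθ0' : θ' 0 = 0)
    (hq : ∀ x : ℤ, 1 ≤ x → p x < 1) (hq' : ∀ x : ℤ, 1 ≤ x → p' x < 1)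
    (hpθ : ∀ x : ℤ, p x = 0 → θ x = 0) (hpθ' : ∀ x : ℤ, p' x = 0 → θ' x = 0)
    (hrκ : ∀ x : ℤ, r x = 0 → κ x = 0) (hrκ' : ∀ x : ℤ, r' x = 0 → κ' x = 0)
    (V V' : H ≃ₗᵢ[ℂ] H)
    (hV : IsUprtk p r θ κ V) (hV' : IsUprtk p' r' θ' κ' V') :
    (∃ W : H ≃ₗᵢ[ℂ] H,
        (∀ x : ℤ, 1 ≤ x → (Hx x).map (W.toLinearEquiv : H →ₗ[ℂ] H) = Hx x) ∧
        (∀ ψ ∈ Hge 1, W (V (W.symm ψ)) = V' ψ)) ↔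
      (∀ x : ℤ, 1 ≤ x → p x = p' x ∧ r x = r' x ∧ θ x = θ' x ∧ κ x = κ' x) :=
  unitary_equiv_iff_case_two_general p p' r r' θ θ' κ κ' hp hp' hr hr' hθ hθ' hκ hκ' hp0 hp0' hθ0
    hθ0' hq hpθ hpθ' hrκ hrκ' V V' hV hV'
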